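/- Let S be a finite nonempty state space and A_1, ..., A_n finite nonempty action sets. For every centralized joint policy π^C : S → PMF(A_1 × ⋯ × A_n), there exist a finite signal space Z, a state-independent signal distribution p ∈ PMF(Z), and deterministic decentralized policies f_i : S × Z → A_i for each agent i, such that for every state s, the pushforward of p under the map z ↦ (f_1(s, z), ..., f_n(s, z)) equals π^C(s). That is, every centralized joint policy can be realized by decentralized agents who all observe a common signal drawn from a fixed distribution and respond to it deterministically. -/

import Mathlib

/-!
Draw the whole table of actions `g : S → ∀ i, A i` at once, choosing `g s ~ πC s` independently
for every state `s`. This product distribution does not depend on the current state, and its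
marginal at `s` is `πC s`; so with the table as common signal, agent `i` at state `s` simply plays
`g s i`. A finite type of signals in `Type` is obtained by enumerating the tables.
-/

open Finset

namespace PMF

theorem sum_coe_eq_one {α : Type*} [Fintype α] (p : PMF α) : ∑ a, p a = 1 :=
  (tsum_fintype _).symm.trans p.tsum_coe

section Pi

variable {ι : Type*} [Fintype ι] [DecidableEq ι] {β : ι → Type*} [∀ i, Fintype (β i)]

noncomputable def pi (μ : ∀ i, PMF (β i)) : PMF (∀ i, β i) :=
  ofFintype (fun g => ∏ i, μ i (g i)) (by simp [← Fintype.prod_sum, sum_coe_eq_one])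

theorem pi_apply (μ : ∀ i, PMF (β i)) (g : ∀ i, β i) : pi μ g = ∏ i, μ i (g i) := rfl

theorem pi_map_eval (μ : ∀ i, PMF (β i)) (i : ι) : (pi μ).map (fun g => g i) = μ i := by
  classical
  ext a
  calc (pi μ).map (fun g => g i) a
      = ∑ g ∈ Fintype.piFinset (Function.update (fun _ => univ) i {a}), ∏ j, μ j (g j) := by
        rw [Fintype.piFinset_update_singleton_eq_filter_piFinset_eq (fun j => univ) i
          (Finset.mem_univ a), Fintype.piFinset_univ, sum_filter, map_apply, tsum_fintype]
        simp only [pi_apply, eq_comm]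
    _ = ∏ j, ∑ x ∈ Function.update (fun _ => univ) i {a} j, μ j x := (prod_univ_sum _ _).symm
    _ = μ i a := by
        rw [← mul_prod_erase univ _ (Finset.mem_univ i), Finset.prod_eq_one fun j hj => ?_]
        · simp
        · simp [Function.update_of_ne (ne_of_mem_erase hj), sum_coe_eq_one]

end Pi

end PMF

theorem centralized_realized_by_signal_general
    (S : Type*) [Fintype S]
    (n : ℕ) (A : Fin n → Type*) [∀ i, Fintype (A i)]
    (πC : S → PMF (∀ i, A i)) :
    ∃ (Z : Type) (_ : Fintype Z) (p : PMF Z) (f : ∀ i : Fin n, S → Z → A i),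
      ∀ s : S, p.map (fun z => fun i => f i s z) = πC s := by
  classical
  let e := Fintype.equivFin (S → ∀ i, A i)
  refine ⟨_, inferInstance, (PMF.pi πC).map e, fun i s z => e.symm z s i, fun s => ?_⟩
  rw [PMF.map_comp, ← PMF.pi_map_eval πC s]
  congr 1
  funext g
  simp

/-- Every centralized joint policy `πC : S → PMF (∀ i, A i)` on a finite
nonempty state space `S` with finite nonempty action sets `A i` can be realized by a
finite signal space `Z`, a state-independent signal distribution `p : PMF Z`, and
deterministic decentralized policies `f i : S → Z → A i`: at every state `s`, the
pushforward of `p` under `z ↦ (fun i => f i s z)` equals `πC s`. -/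
theorem centralized_realized_by_signal
    (S : Type*) [Fintype S] [Nonempty S]
    (n : ℕ) (A : Fin n → Type*) [∀ i, Fintype (A i)] [∀ i, Nonempty (A i)]
    (πC : S → PMF (∀ i, A i)) :
    ∃ (Z : Type) (_ : Fintype Z) (p : PMF Z) (f : ∀ i : Fin n, S → Z → A i),
      ∀ s : S, p.map (fun z => fun i => f i s z) = πC s :=
  centralized_realized_by_signal_general S n A πC
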